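/- arXiv:2204.12439 — 3 statements merged into one kernel-verified Lean document; each statement's English description precedes it below -/
import Mathlib

section
/- Let (M^n, g, f, h) be a compact Einstein-type manifold with boundary. Then the boundary ∂M is totally umbilical: its second fundamental form with respect to ν = −∇f/|∇f| satisfies α_{ab} = (h/|∇f|)·g_{ab}, so ∂M has constant-multiple-of-metric second fundamental form and mean curvature H = h/|∇f|. -/
open Matrix

/-- Euclidean norm of a vector expressed in an orthonormal frame. -/
noncomputable def vnorm {n : ℕ} (v : Fin n → ℝ) : ℝ := Real.sqrt (∑ i, v i ^ 2)

/-!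
On `∂M` we have `f = 0`, so the Einstein-type equation `f Ric = ∇²f + h g` collapses to
`∇²f = -h g`. Restricting a multiple of the metric to an orthonormal tangent frame gives the same
multiple of the identity, so `α = -|∇f|⁻¹ (-h) I = (h / |∇f|) I`; averaging its trace over the
`n - 1` tangent directions gives `H = h / |∇f|`.
-/

namespace Matrix

variable {ι n R : Type*} [Fintype n] [CommSemiring R]

theorem mul_mul_transpose_apply (E : Matrix ι n R) (A : Matrix n n R) (a b : ι) :
    (E * A * Eᵀ) a b = E a ⬝ᵥ (A *ᵥ E b) := by
  rw [mul_apply', dotProduct_mulVec, ← mul_apply']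
  rfl

theorem mul_transpose_eq_one_of_orthonormal [DecidableEq ι] {E : Matrix ι n R}
    (hE : ∀ a b, E a ⬝ᵥ E b = if a = b then 1 else 0) : E * Eᵀ = 1 := by
  ext a b
  rw [mul_apply', one_apply]
  exact hE a b

theorem mul_smul_one_mul_transpose [DecidableEq ι] [DecidableEq n] {E : Matrix ι n R}
    (hE : E * Eᵀ = 1) (c : R) : E * (c • (1 : Matrix n n R)) * Eᵀ = c • 1 := by
  rw [Matrix.mul_smul, Matrix.mul_one, smul_mul, hE]

theorem one_div_card_mul_trace_smul_one {K : Type*} [Field K] [Fintype ι] [DecidableEq ι]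
    (hι : (Fintype.card ι : K) ≠ 0) (c : K) :
    1 / (Fintype.card ι : K) * (c • (1 : Matrix ι ι K)).trace = c := by
  rw [trace_smul, trace_one, smul_eq_mul]
  field_simp

end Matrix

theorem einstein_type_boundary_umbilical_general {M : Type*}
    {n : ℕ} (hn : 3 ≤ n)
    (f h : M → ℝ) (Ric Hess : M → Matrix (Fin n) (Fin n) ℝ)
    (gradf : M → (Fin n → ℝ))
    (bdry : Set M)
    (hf0 : ∀ x ∈ bdry, f x = 0)
    (heq : ∀ x, f x • Ric x = Hess x + h x • (1 : Matrix (Fin n) (Fin n) ℝ))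
    (e : M → Fin (n - 1) → (Fin n → ℝ))
    (hortho : ∀ x ∈ bdry, ∀ a b, e x a ⬝ᵥ e x b = if a = b then 1 else 0)
    (α : M → Matrix (Fin (n - 1)) (Fin (n - 1)) ℝ)
    (hα : ∀ x ∈ bdry, ∀ a b,
      α x a b = -(vnorm (gradf x))⁻¹ * (e x a ⬝ᵥ (Hess x *ᵥ e x b))) :
    ∀ x ∈ bdry,
      α x = (h x / vnorm (gradf x)) • (1 : Matrix (Fin (n - 1)) (Fin (n - 1)) ℝ) ∧
      (1 / ((n : ℝ) - 1)) * (α x).trace = h x / vnorm (gradf x) := by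
  intro x hx
  have hHess : Hess x = -h x • (1 : Matrix (Fin n) (Fin n) ℝ) := by
    have := heq x
    rw [hf0 x hx, zero_smul, eq_comm, ← eq_neg_iff_add_eq_zero] at this
    rw [this, neg_smul]
  have hE : of (e x) * (of (e x))ᵀ = 1 := mul_transpose_eq_one_of_orthonormal (hortho x hx)
  have humbilic : α x = (h x / vnorm (gradf x)) • (1 : Matrix (Fin (n - 1)) (Fin (n - 1)) ℝ) := by
    have hα' : α x = -(vnorm (gradf x))⁻¹ • (of (e x) * Hess x * (of (e x))ᵀ) := by
      ext a b
      rw [hα x hx, Matrix.smul_apply, mul_mul_transpose_apply, smul_eq_mul]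
      rfl
    rw [hα', hHess, mul_smul_one_mul_transpose hE, smul_smul, neg_mul_neg, inv_mul_eq_div]
  have hcard : (Fintype.card (Fin (n - 1)) : ℝ) = n - 1 := by
    rw [Fintype.card_fin, Nat.cast_sub (by omega), Nat.cast_one]
  refine ⟨humbilic, ?_⟩
  rw [humbilic, ← hcard]
  exact one_div_card_mul_trace_smul_one (by rw [hcard, sub_ne_zero, Nat.cast_ne_one]; omega) _

/-- Let `(Mⁿ, g, f, h)` be a compact Einstein-type manifold with boundary.
Then `∂M` is totally umbilical: with respect to the unit normal `ν = −∇f/|∇f|`, its second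
fundamental form satisfies `α_{ab} = (h/|∇f|)·g_{ab}`, and the mean curvature is
`H = h/|∇f|`. Here `e x` is a tangent orthonormal frame of `∂M` at `x`, and the second
fundamental form is computed through `α_{ab} = −(1/|∇f|)·∇²f(e_a, e_b)` on `∂M`. -/
theorem einstein_type_boundary_umbilical {M : Type*} [TopologicalSpace M] [CompactSpace M]
    {n : ℕ} (hn : 3 ≤ n)
    (f h : M → ℝ) (Ric Hess : M → Matrix (Fin n) (Fin n) ℝ)
    (gradf : M → (Fin n → ℝ))
    (bdry : Set M)
    (hf0 : ∀ x ∈ bdry, f x = 0) (hfpos : ∀ x ∉ bdry, 0 < f x)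
    (heq : ∀ x, f x • Ric x = Hess x + h x • (1 : Matrix (Fin n) (Fin n) ℝ))
    (hgradne : ∀ x ∈ bdry, vnorm (gradf x) ≠ 0)
    (e : M → Fin (n - 1) → (Fin n → ℝ))
    (hortho : ∀ x ∈ bdry, ∀ a b, e x a ⬝ᵥ e x b = if a = b then 1 else 0)
    (htangent : ∀ x ∈ bdry, ∀ a, e x a ⬝ᵥ gradf x = 0)
    (α : M → Matrix (Fin (n - 1)) (Fin (n - 1)) ℝ)
    (hα : ∀ x ∈ bdry, ∀ a b,
      α x a b = -(vnorm (gradf x))⁻¹ * (e x a ⬝ᵥ (Hess x *ᵥ e x b))) :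
    ∀ x ∈ bdry,
      α x = (h x / vnorm (gradf x)) • (1 : Matrix (Fin (n - 1)) (Fin (n - 1)) ℝ) ∧
      (1 / ((n : ℝ) - 1)) * (α x).trace = h x / vnorm (gradf x) :=
  einstein_type_boundary_umbilical_general hn f h Ric Hess gradf bdry hf0 heq e hortho α hα
end

section
/- Let (M^n, g) be a Riemannian manifold with f·Ric = ∇²f + h·g (Einstein-type). Then div(R̊ic(∇f)) = ((n−2)/(2n))·⟨∇R, ∇f⟩ + f·|R̊ic|², where R̊ic is the traceless Ricci tensor. -/
open Matrix

/-! Since `Hess = f·Ric − h·g` and `R̊ic` is traceless, `⟨R̊ic, ∇²f⟩ = f⟨R̊ic, Ric⟩ = f|R̊ic|²`.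
The divergence of `R̊ic = Ric − (R/n)g` is `½∇R − (1/n)∇R` by the contracted Bianchi identity,
and `½ − 1/n = (n−2)/(2n)`. -/

/-- The traceless part of a 2-tensor in an orthonormal frame (`g` is the identity matrix). -/
noncomputable def tless {n : ℕ} (A : Matrix (Fin n) (Fin n) ℝ) : Matrix (Fin n) (Fin n) ℝ :=
  A - (A.trace / n) • 1

/-- Squared Frobenius norm of a 2-tensor in an orthonormal frame. -/
noncomputable def frobSq {n : ℕ} (A : Matrix (Fin n) (Fin n) ℝ) : ℝ := ∑ i, ∑ j, A i j ^ 2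

section Algebra

variable {n : ℕ}

theorem sum_mul_one_eq_trace (B : Matrix (Fin n) (Fin n) ℝ) :
    ∑ i, ∑ j, B i j * (1 : Matrix (Fin n) (Fin n) ℝ) i j = B.trace := by
  simp [Matrix.one_apply, Matrix.trace]

theorem trace_tless (A : Matrix (Fin n) (Fin n) ℝ) : (tless A).trace = 0 := by
  rcases Nat.eq_zero_or_pos n with rfl | hn
  · simp [Matrix.trace]
  · have hn0 : (n : ℝ) ≠ 0 := by positivity
    simp [tless, Matrix.trace_sub, Matrix.trace_smul, Matrix.trace_one, hn0]

theorem sum_tless_mul_self (A : Matrix (Fin n) (Fin n) ℝ) :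
    ∑ i, ∑ j, tless A i j * A i j = frobSq (tless A) := by
  have hA : ∀ i j, A i j = tless A i j + (A.trace / n) * (1 : Matrix (Fin n) (Fin n) ℝ) i j := by
    intro i j
    simp [tless]
  calc ∑ i, ∑ j, tless A i j * A i j
      = ∑ i, ∑ j, (tless A i j ^ 2
          + (A.trace / n) * (tless A i j * (1 : Matrix (Fin n) (Fin n) ℝ) i j)) := by
        refine Finset.sum_congr rfl fun i _ => Finset.sum_congr rfl fun j _ => ?_
        rw [hA i j]
        ring
    _ = frobSq (tless A) := by
        simp only [Finset.sum_add_distrib, ← Finset.mul_sum, sum_mul_one_eq_trace, trace_tless,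
          frobSq]
        ring

theorem sum_tless_mul_of_smul_eq_add_smul_one {f h : ℝ} {R H : Matrix (Fin n) (Fin n) ℝ}
    (heq : f • R = H + h • (1 : Matrix (Fin n) (Fin n) ℝ)) :
    ∑ i, ∑ j, tless R i j * H i j = f * frobSq (tless R) := by
  have hH : H = f • R - h • (1 : Matrix (Fin n) (Fin n) ℝ) := eq_sub_of_add_eq heq.symm
  calc ∑ i, ∑ j, tless R i j * H i j
      = ∑ i, ∑ j, (f * (tless R i j * R i j)
          - h * (tless R i j * (1 : Matrix (Fin n) (Fin n) ℝ) i j)) := by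
        refine Finset.sum_congr rfl fun i _ => Finset.sum_congr rfl fun j _ => ?_
        simp only [hH, Matrix.sub_apply, Matrix.smul_apply, smul_eq_mul]
        ring
    _ = f * frobSq (tless R) := by
        simp only [Finset.sum_sub_distrib, ← Finset.mul_sum, sum_mul_one_eq_trace, trace_tless,
          sum_tless_mul_self]
        ring

end Algebra

section Divergence

variable {M : Type*} {n : ℕ} {grad : (M → ℝ) → M → (Fin n → ℝ)}
  {divT : (M → Matrix (Fin n) (Fin n) ℝ) → M → (Fin n → ℝ)}

def gradAddMonoidHom
    (hSub : ∀ (T S : M → Matrix (Fin n) (Fin n) ℝ),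
      divT (fun x => T x - S x) = fun x => divT T x - divT S x)
    (hdivg : ∀ φ : M → ℝ, divT (fun x => φ x • (1 : Matrix (Fin n) (Fin n) ℝ)) = grad φ) :
    (M → ℝ) →+ (M → Fin n → ℝ) :=
  AddMonoidHom.ofMapSub grad fun a b => by
    rw [← hdivg, ← hdivg, ← hdivg]
    simp only [Pi.sub_apply, sub_smul, hSub]
    rfl

theorem divT_tless
    (hSub : ∀ (T S : M → Matrix (Fin n) (Fin n) ℝ),
      divT (fun x => T x - S x) = fun x => divT T x - divT S x)
    (hdivg : ∀ φ : M → ℝ, divT (fun x => φ x • (1 : Matrix (Fin n) (Fin n) ℝ)) = grad φ)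
    (Ric : M → Matrix (Fin n) (Fin n) ℝ) :
    divT (fun x => tless (Ric x)) =
      fun x => divT Ric x - (n : ℝ)⁻¹ • grad (fun y => (Ric y).trace) x := by
  have hgrad : grad (fun y => (Ric y).trace / n) = (n : ℝ)⁻¹ • grad (fun y => (Ric y).trace) := by
    -- additivity alone makes `grad` commute with the scalar `1/n`
    have h : grad ((n : ℝ)⁻¹ • fun y => (Ric y).trace) = (n : ℝ)⁻¹ • grad fun y => (Ric y).trace :=
      map_inv_natCast_smul (gradAddMonoidHom hSub hdivg) ℝ ℝ n _
    simpa only [div_eq_inv_mul, ← smul_eq_mul, ← Pi.smul_def] using h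
  simp only [tless]
  rw [hSub Ric, hdivg, hgrad]
  rfl

end Divergence

/-- Let `(Mⁿ, g)` be a Riemannian manifold with `f·Ric = ∇²f + h·g`
(Einstein-type). Then `div(R̊ic(∇f)) = ((n−2)/(2n))·⟨∇R, ∇f⟩ + f·|R̊ic|²`, where `R̊ic` is the
traceless Ricci tensor. The hypotheses record the contracted Bianchi identity, the pointwise
identity `div(T(∇f)) = (div T)(∇f) + ⟨T, ∇²f⟩`, and the linearity rules used. -/
theorem div_traceless_ric_gradf {M : Type*} {n : ℕ} (hn : 3 ≤ n)
    (f h : M → ℝ) (Ric Hess : M → Matrix (Fin n) (Fin n) ℝ)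
    (heq : ∀ x, f x • Ric x = Hess x + h x • (1 : Matrix (Fin n) (Fin n) ℝ))
    (grad : (M → ℝ) → M → (Fin n → ℝ))
    (divT : (M → Matrix (Fin n) (Fin n) ℝ) → M → (Fin n → ℝ))
    (divV : (M → (Fin n → ℝ)) → M → ℝ)
    (hBianchi : divT Ric = fun x => (1 / 2 : ℝ) • grad (fun y => (Ric y).trace) x)
    (hSub : ∀ (T S : M → Matrix (Fin n) (Fin n) ℝ),
      divT (fun x => T x - S x) = fun x => divT T x - divT S x)
    (hdivg : ∀ φ : M → ℝ, divT (fun x => φ x • (1 : Matrix (Fin n) (Fin n) ℝ)) = grad φ)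
    (hdivTgrad : ∀ T : M → Matrix (Fin n) (Fin n) ℝ,
      divV (fun x => T x *ᵥ grad f x) =
        fun x => (divT T x) ⬝ᵥ grad f x + ∑ i, ∑ j, T x i j * Hess x i j) :
    divV (fun x => tless (Ric x) *ᵥ grad f x) =
      fun x => (((n : ℝ) - 2) / (2 * n)) * (grad (fun y => (Ric y).trace) x ⬝ᵥ grad f x)
        + f x * frobSq (tless (Ric x)) := by
  have hn0 : (n : ℝ) ≠ 0 := by positivity
  have hcoeff : (1 / 2 : ℝ) - (n : ℝ)⁻¹ = ((n : ℝ) - 2) / (2 * n) := by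
    field_simp
  rw [hdivTgrad, divT_tless hSub hdivg, hBianchi]
  funext x
  beta_reduce
  rw [sum_tless_mul_of_smul_eq_add_smul_one (heq x), ← sub_smul, smul_dotProduct, smul_eq_mul,
    hcoeff]
end

section
/- For a symmetric traceless 2-tensor T on a 3-dimensional inner product space, the Okumura inequality holds: 6·tr(T³) ≥ −√6·|T|³, where |T|² = tr(T²). -/
/-!
Diagonalizing `T` by the spectral theorem reduces the claim to its eigenvalues `a, b, c`, which
sum to zero. For such triples `(a² + b² + c²)³ - 6 (a³ + b³ + c³)²` is twice the discriminant
`((a - b)(b - c)(c - a))²` of the characteristic polynomial, so `|6 tr(T³)| ≤ √6 |T|³`.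
-/

open Matrix Unitary

theorem Matrix.IsHermitian.trace_pow_eq_sum_eigenvalues_pow {𝕜 n : Type*} [RCLike 𝕜] [Fintype n]
    [DecidableEq n] {A : Matrix n n 𝕜} (hA : A.IsHermitian) (k : ℕ) :
    (A ^ k).trace = ∑ i, (hA.eigenvalues i : 𝕜) ^ k := by
  conv_lhs => rw [hA.spectral_theorem, ← map_pow, conjStarAlgAut_apply, trace_mul_cycle,
    coe_star_mul_self, one_mul, diagonal_pow, trace_diagonal]
  simp

theorem six_mul_sq_sum_cubes_le_of_add_eq_zero {a b c : ℝ} (h : a + b + c = 0) :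
    6 * (a ^ 3 + b ^ 3 + c ^ 3) ^ 2 ≤ (a ^ 2 + b ^ 2 + c ^ 2) ^ 3 := by
  obtain rfl : c = -(a + b) := by linarith
  nlinarith [sq_nonneg ((a - b) * (2 * a + b) * (a + 2 * b))]

theorem neg_sqrt_six_mul_le_six_mul_sum_cubes_of_add_eq_zero {a b c : ℝ} (h : a + b + c = 0) :
    -√6 * √(a ^ 2 + b ^ 2 + c ^ 2) ^ 3 ≤ 6 * (a ^ 3 + b ^ 3 + c ^ 3) := by
  set s := a ^ 2 + b ^ 2 + c ^ 2
  have hs : √s ^ 2 = s := Real.sq_sqrt (by positivity)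
  have hsq : (6 * (a ^ 3 + b ^ 3 + c ^ 3)) ^ 2 ≤ (√6 * √s ^ 3) ^ 2 :=
    calc (6 * (a ^ 3 + b ^ 3 + c ^ 3)) ^ 2 ≤ 6 * s ^ 3 := by
          nlinarith [six_mul_sq_sum_cubes_le_of_add_eq_zero h]
      _ = 6 * (√s ^ 2) ^ 3 := by rw [hs]
      _ = (√6 * √s ^ 3) ^ 2 := by
          rw [mul_pow, Real.sq_sqrt (show (0 : ℝ) ≤ 6 by norm_num)]; ring
  rw [neg_mul]
  exact (abs_le_of_sq_le_sq' hsq (by positivity)).1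

/-- **Okumura's inequality.** For a symmetric traceless 2-tensor `T` on a
3-dimensional inner product space (represented as a symmetric trace-free `3 × 3` real matrix
in an orthonormal basis), `6·tr(T³) ≥ −√6·|T|³`, where `|T|² = tr(T²)`. -/
theorem okumura_inequality (T : Matrix (Fin 3) (Fin 3) ℝ)
    (hsymm : T.IsSymm) (h0 : T.trace = 0) :
    6 * (T ^ 3).trace ≥ -Real.sqrt 6 * Real.sqrt ((T ^ 2).trace) ^ 3 := by
  have hT : T.IsHermitian := isHermitian_iff_isSymm.mpr hsymm
  have h_sum : ∑ i, hT.eigenvalues i = 0 := by simpa [hT.trace_eq_sum_eigenvalues] using h0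
  rw [Fin.sum_univ_three] at h_sum
  simp only [hT.trace_pow_eq_sum_eigenvalues_pow, Fin.sum_univ_three]
  exact neg_sqrt_six_mul_le_six_mul_sum_cubes_of_add_eq_zero h_sum
end
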